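/- Dual Orlicz-Minkowski inequality: Let K, L be star bodies in ℝⁿ and φ : (0,∞) → (0,∞) a continuous positive function such that F(t) = φ(t^{-1/n}) is convex on (0,∞). Then Ṽ_φ(K, L) ≥ |K| · φ(|K|^{1/n} · |L|^{-1/n}). Moreover, if F is strictly convex, equality holds if and only if K and L are dilates of each other. -/

import Mathlib

noncomputable section

open Metric Set MeasureTheory Filter

/-- A star body about the origin in `ℝⁿ`, represented by its radial function,
which is continuous and positive on the unit sphere. -/
structure StarBody (n : ℕ) where
  ρ : EuclideanSpace ℝ (Fin n) → ℝ
  pos : ∀ u : EuclideanSpace ℝ (Fin n), ‖u‖ = 1 → 0 < ρ u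
  cont : ContinuousOn ρ (sphere (0 : EuclideanSpace ℝ (Fin n)) 1)

/-- `M` is the Orlicz `φ`-radial addition `K +̃_φ L`, i.e.
`φ(ρ_M(u)/ρ_K(u), ρ_M(u)/ρ_L(u)) = 1` for all `u` on the unit sphere. -/
def IsOrliczSum {n : ℕ} (φ : ℝ → ℝ → ℝ) (K L M : StarBody n) : Prop :=
  ∀ u : EuclideanSpace ℝ (Fin n), ‖u‖ = 1 →
    φ (M.ρ u / K.ρ u) (M.ρ u / L.ρ u) = 1

/-- The spherical Lebesgue measure on the unit sphere `S^{n-1}`. -/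
def sphereMeasure (n : ℕ) : Measure (sphere (0 : EuclideanSpace ℝ (Fin n)) 1) :=
  (volume : Measure (EuclideanSpace ℝ (Fin n))).toSphere

/-- The volume of a star body via the polar coordinate formula
`|K| = (1/n) ∫_{S^{n-1}} ρ_K(u)ⁿ dσ(u)`. -/
def StarBody.vol {n : ℕ} (K : StarBody n) : ℝ :=
  (1 / (n : ℝ)) * ∫ u : sphere (0 : EuclideanSpace ℝ (Fin n)) 1,
    (K.ρ u) ^ n ∂(sphereMeasure n)

/-- The Orlicz `L_φ`-dual mixed volume
`Ṽ_φ(K,L) = (1/n) ∫_{S^{n-1}} φ(ρ_K(u)/ρ_L(u)) ρ_K(u)ⁿ dσ(u)`. -/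
def dualMixedVolume {n : ℕ} (φ : ℝ → ℝ) (K L : StarBody n) : ℝ :=
  (1 / (n : ℝ)) * ∫ u : sphere (0 : EuclideanSpace ℝ (Fin n)) 1,
    φ (K.ρ u / L.ρ u) * (K.ρ u) ^ n ∂(sphereMeasure n)

/-!
Put `w = ρ_K ^ n` and `h = (ρ_L / ρ_K) ^ n` on the sphere. Then `∫ w dσ = n |K|`,
`∫ w h dσ = n |L|`, and `∫ w F(h) dσ = n Ṽ_φ(K, L)` because `F(h) = φ(ρ_K / ρ_L)`.
So the inequality is Jensen's inequality for `F` and the probability measure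
`w dσ / ∫ w dσ`, using `F(|L| / |K|) = φ(|K|^{1/n} |L|^{-1/n})`. For strictly convex `F`,
equality in Jensen forces the continuous function `h` to be constant, that is `ρ_L = λ ρ_K`.
-/

theorem Convex.exists_Icc_of_isCompact_subset {s t : Set ℝ} (hs : Convex ℝ s) (ht : IsCompact t)
    (htne : t.Nonempty) (hts : t ⊆ s) : ∃ a b, t ⊆ Icc a b ∧ Icc a b ⊆ s :=
  ⟨sInf t, sSup t, ht.isBounded.subset_Icc_sInf_sSup,
    hs.ordConnected.out (hts (ht.sInf_mem htne)) (hts (ht.sSup_mem htne))⟩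

section WeightedJensen

variable {X : Type*} [MeasurableSpace X] {σ : Measure X} {w : X → ℝ}

theorem average_withDensity_ofReal (hw : Integrable w σ) (hw0 : 0 ≤ w) (g : X → ℝ) :
    ⨍ x, g x ∂σ.withDensity (fun x => ENNReal.ofReal (w x)) =
      (∫ x, w x * g x ∂σ) / ∫ x, w x ∂σ := by
  rw [average_eq, measureReal_def, withDensity_apply _ MeasurableSet.univ, Measure.restrict_univ,
    ← ofReal_integral_eq_lintegral_ofReal hw (Filter.Eventually.of_forall hw0),
    ENNReal.toReal_ofReal (integral_nonneg hw0),
    integral_withDensity_eq_integral_toReal_smul₀ hw.aemeasurable.ennreal_ofReal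
      (Filter.Eventually.of_forall fun _ => ENNReal.ofReal_lt_top)]
  simp only [ENNReal.toReal_ofReal (hw0 _), smul_eq_mul]
  rw [inv_mul_eq_div]

theorem absolutelyContinuous_withDensity_ofReal (hw : AEMeasurable w σ) (hw0 : ∀ x, 0 < w x) :
    σ ≪ σ.withDensity (fun x => ENNReal.ofReal (w x)) :=
  withDensity_absolutelyContinuous' hw.ennreal_ofReal
    (Filter.Eventually.of_forall fun x => (ENNReal.ofReal_pos.2 (hw0 x)).ne')

variable [TopologicalSpace X] [CompactSpace X] [Nonempty X] [OpensMeasurableSpace X]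
  [IsFiniteMeasure σ] [σ.IsOpenPosMeasure] {f : X → ℝ} {s : Set ℝ} {g : ℝ → ℝ}

theorem Continuous.integral_pos_of_forall_pos (hw : Continuous w) (hw0 : ∀ x, 0 < w x) :
    0 < ∫ x, w x ∂σ :=
  hw.integral_pos_of_hasCompactSupport_nonneg_nonzero (.of_compactSpace w) (fun x => (hw0 x).le)
    (hw0 (Classical.arbitrary X)).ne'

theorem ConvexOn.weighted_map_average_le (hg : ConvexOn ℝ s g) (hgc : ContinuousOn g s)
    (hw : Continuous w) (hw0 : ∀ x, 0 < w x) (hf : Continuous f) (hfs : ∀ x, f x ∈ s) :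
    (∫ x, w x ∂σ) * g ((∫ x, w x * f x ∂σ) / ∫ x, w x ∂σ) ≤ ∫ x, w x * g (f x) ∂σ := by
  have hwi : Integrable w σ := hw.integrable_of_hasCompactSupport (.of_compactSpace w)
  have hac := absolutelyContinuous_withDensity_ofReal (hw.aemeasurable (μ := σ)) hw0
  set μ := σ.withDensity fun x => ENNReal.ofReal (w x)
  have : IsFiniteMeasure μ := isFiniteMeasure_withDensity_ofReal hwi.2
  have : NeZero μ := ⟨fun h0 => NeZero.ne σ (Measure.measure_univ_eq_zero.1 (hac (by simp [h0])))⟩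
  -- `map_average_le` needs a closed domain: shrink `s` to an interval around the compact range
  obtain ⟨a, b, hfab, habs⟩ := hg.1.exists_Icc_of_isCompact_subset (isCompact_range hf)
    (range_nonempty f) (range_subset_iff.2 hfs)
  have hjensen := (hg.subset habs (convex_Icc a b)).map_average_le (hgc.mono habs) isClosed_Icc
    (ae_of_all μ fun x => hfab (mem_range_self x))
    (hf.integrable_of_hasCompactSupport (.of_compactSpace f))
    ((hgc.comp_continuous hf hfs).integrable_of_hasCompactSupport (.of_compactSpace _))
  have hpos : 0 < ∫ x, w x ∂σ := hw.integral_pos_of_forall_pos hw0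
  rwa [average_withDensity_ofReal hwi (fun x => (hw0 x).le),
    average_withDensity_ofReal hwi (fun x => (hw0 x).le), le_div_iff₀' hpos] at hjensen

theorem StrictConvexOn.weighted_map_average_eq_iff (hg : StrictConvexOn ℝ s g)
    (hgc : ContinuousOn g s) (hw : Continuous w) (hw0 : ∀ x, 0 < w x) (hf : Continuous f)
    (hfs : ∀ x, f x ∈ s) :
    ∫ x, w x * g (f x) ∂σ = (∫ x, w x ∂σ) * g ((∫ x, w x * f x ∂σ) / ∫ x, w x ∂σ) ↔
      ∃ c, ∀ x, f x = c := by
  have hwi : Integrable w σ := hw.integrable_of_hasCompactSupport (.of_compactSpace w)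
  have hpos : 0 < ∫ x, w x ∂σ := hw.integral_pos_of_forall_pos hw0
  constructor
  · intro heq
    have hac := absolutelyContinuous_withDensity_ofReal (hw.aemeasurable (μ := σ)) hw0
    set μ := σ.withDensity fun x => ENNReal.ofReal (w x)
    have : IsFiniteMeasure μ := isFiniteMeasure_withDensity_ofReal hwi.2
    obtain ⟨a, b, hfab, habs⟩ := hg.convexOn.1.exists_Icc_of_isCompact_subset (isCompact_range hf)
      (range_nonempty f) (range_subset_iff.2 hfs)
    rcases (hg.subset habs (convex_Icc a b)).ae_eq_const_or_map_average_lt (hgc.mono habs)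
      isClosed_Icc (ae_of_all μ fun x => hfab (mem_range_self x))
      (hf.integrable_of_hasCompactSupport (.of_compactSpace f))
      ((hgc.comp_continuous hf hfs).integrable_of_hasCompactSupport (.of_compactSpace _))
      with hconst | hlt
    · exact ⟨_, congrFun ((hf.ae_eq_iff_eq σ continuous_const).1 (hac.ae_le hconst))⟩
    · rw [average_withDensity_ofReal hwi (fun x => (hw0 x).le),
        average_withDensity_ofReal hwi (fun x => (hw0 x).le), lt_div_iff₀' hpos, ← heq] at hlt
      exact absurd hlt (lt_irrefl _)
  · rintro ⟨c, hc⟩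
    simp only [hc, integral_mul_const, mul_div_cancel_left₀ _ hpos.ne']

end WeightedJensen

theorem Real.pow_rpow_neg_one_div {x : ℝ} (hx : 0 ≤ x) {n : ℕ} (hn : n ≠ 0) :
    (x ^ n) ^ (-(1 : ℝ) / n) = x⁻¹ := by
  rw [neg_div, Real.rpow_neg (pow_nonneg hx n), one_div, Real.pow_rpow_inv_natCast hx hn]

theorem Real.div_rpow_neg {x y : ℝ} (hx : 0 ≤ x) (hy : 0 ≤ y) (a : ℝ) :
    (y / x) ^ (-a) = x ^ a * y ^ (-a) := by
  rw [Real.div_rpow hy hx, Real.rpow_neg hx, div_inv_eq_mul, mul_comm]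

theorem ContinuousOn.comp_rpow_const_Ioi {φ : ℝ → ℝ} (hφ : ContinuousOn φ (Ioi 0)) (a : ℝ) :
    ContinuousOn (fun t : ℝ => φ (t ^ a)) (Ioi 0) :=
  hφ.comp (fun t ht => (Real.continuousAt_rpow_const t a (.inl (ne_of_gt ht))).continuousWithinAt)
    fun _ ht => Real.rpow_pos_of_pos ht a

instance (n : ℕ) : IsFiniteMeasure (sphereMeasure n) := by
  unfold sphereMeasure; infer_instance

instance (n : ℕ) : (sphereMeasure n).IsOpenPosMeasure := by
  unfold sphereMeasure; infer_instance

theorem nonempty_sphere_of_pos {n : ℕ} (hn : 0 < n) :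
    Nonempty (sphere (0 : EuclideanSpace ℝ (Fin n)) 1) :=
  have : Nontrivial (EuclideanSpace ℝ (Fin n)) :=
    Module.nontrivial_of_finrank_pos (R := ℝ) (by rwa [finrank_euclideanSpace_fin])
  (NormedSpace.sphere_nonempty.mpr zero_le_one).to_subtype

namespace StarBody

variable {n : ℕ} (K L : StarBody n)

theorem continuous_ρ_sphere : Continuous fun u : sphere (0 : EuclideanSpace ℝ (Fin n)) 1 => K.ρ u :=
  K.cont.domRestrict

theorem ρ_sphere_pos (u : sphere (0 : EuclideanSpace ℝ (Fin n)) 1) : 0 < K.ρ u :=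
  K.pos u (mem_sphere_zero_iff_norm.mp u.2)

theorem vol_nonneg : 0 ≤ K.vol :=
  mul_nonneg (by positivity) (integral_nonneg fun u => pow_nonneg (K.ρ_sphere_pos u).le n)

theorem integral_pow_eq_mul_vol (hn : n ≠ 0) :
    ∫ u, K.ρ u ^ n ∂sphereMeasure n = n * K.vol := by
  rw [vol, ← mul_assoc, mul_one_div_cancel (Nat.cast_ne_zero.2 hn), one_mul]

theorem integral_pow_mul_ratio_pow_eq_mul_vol (hn : n ≠ 0) :
    ∫ u, K.ρ u ^ n * (L.ρ u / K.ρ u) ^ n ∂sphereMeasure n = n * L.vol := by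
  rw [← L.integral_pow_eq_mul_vol hn]
  congr 1 with u
  rw [← mul_pow, mul_div_cancel₀ _ (K.ρ_sphere_pos u).ne']

theorem integral_pow_mul_ratio_pow_eq_mul_dualMixedVolume (hn : n ≠ 0) (φ : ℝ → ℝ) :
    ∫ u, K.ρ u ^ n * φ (((L.ρ u / K.ρ u) ^ n) ^ (-(1 : ℝ) / n)) ∂sphereMeasure n =
      n * dualMixedVolume φ K L := by
  rw [dualMixedVolume, ← mul_assoc, mul_one_div_cancel (Nat.cast_ne_zero.2 hn), one_mul]
  congr 1 with u
  rw [Real.pow_rpow_neg_one_div (div_pos (L.ρ_sphere_pos u) (K.ρ_sphere_pos u)).le hn, inv_div,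
    mul_comm]

theorem exists_ratio_pow_eq_iff [Nonempty (sphere (0 : EuclideanSpace ℝ (Fin n)) 1)]
    (hn : n ≠ 0) :
    (∃ c, ∀ u : sphere (0 : EuclideanSpace ℝ (Fin n)) 1, (L.ρ u / K.ρ u) ^ n = c) ↔
      ∃ lam : ℝ, 0 < lam ∧ ∀ u : EuclideanSpace ℝ (Fin n), ‖u‖ = 1 → L.ρ u = lam * K.ρ u := by
  have hratio (u : sphere (0 : EuclideanSpace ℝ (Fin n)) 1) : 0 < L.ρ u / K.ρ u :=
    div_pos (L.ρ_sphere_pos u) (K.ρ_sphere_pos u)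
  constructor
  · rintro ⟨c, hc⟩
    obtain ⟨u₀⟩ := ‹Nonempty (sphere (0 : EuclideanSpace ℝ (Fin n)) 1)›
    refine ⟨L.ρ u₀ / K.ρ u₀, hratio u₀, fun u hu => ?_⟩
    let v : sphere (0 : EuclideanSpace ℝ (Fin n)) 1 := ⟨u, mem_sphere_zero_iff_norm.mpr hu⟩
    have hv : L.ρ v / K.ρ v = L.ρ u₀ / K.ρ u₀ :=
      (pow_left_inj₀ (hratio v).le (hratio u₀).le hn).1 ((hc v).trans (hc u₀).symm)
    rw [← hv, div_mul_cancel₀ _ (K.ρ_sphere_pos v).ne']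
  · rintro ⟨lam, -, hlam⟩
    refine ⟨lam ^ n, fun u => ?_⟩
    rw [hlam u (mem_sphere_zero_iff_norm.mp u.2), mul_div_cancel_right₀ _ (K.ρ_sphere_pos u).ne']

end StarBody

theorem dual_orlicz_minkowski_general {n : ℕ} (hn : 0 < n) (φ : ℝ → ℝ)
    (hφc : ContinuousOn φ (Set.Ioi 0))
    (hF : ConvexOn ℝ (Set.Ioi 0) (fun t : ℝ => φ (t ^ (-(1 : ℝ) / n))))
    (K L : StarBody n) :
    K.vol * φ (K.vol ^ ((1 : ℝ) / n) * L.vol ^ (-(1 : ℝ) / n)) ≤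
      dualMixedVolume φ K L ∧
      (StrictConvexOn ℝ (Set.Ioi 0) (fun t : ℝ => φ (t ^ (-(1 : ℝ) / n))) →
        (dualMixedVolume φ K L =
            K.vol * φ (K.vol ^ ((1 : ℝ) / n) * L.vol ^ (-(1 : ℝ) / n)) ↔
          ∃ lam : ℝ, 0 < lam ∧
            ∀ u : EuclideanSpace ℝ (Fin n), ‖u‖ = 1 → L.ρ u = lam * K.ρ u)) := by
  have hn0 : n ≠ 0 := hn.ne'
  have := nonempty_sphere_of_pos hn
  set S := sphere (0 : EuclideanSpace ℝ (Fin n)) 1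
  have hw : Continuous fun u : S => K.ρ u ^ n := K.continuous_ρ_sphere.pow n
  have hw0 (u : S) : 0 < K.ρ u ^ n := pow_pos (K.ρ_sphere_pos u) n
  have hh : Continuous fun u : S => (L.ρ u / K.ρ u) ^ n :=
    (L.continuous_ρ_sphere.div K.continuous_ρ_sphere fun u => (K.ρ_sphere_pos u).ne').pow n
  have hh0 (u : S) : (L.ρ u / K.ρ u) ^ n ∈ Ioi 0 :=
    pow_pos (div_pos (L.ρ_sphere_pos u) (K.ρ_sphere_pos u)) n
  have hlhs : (∫ u, K.ρ u ^ n ∂sphereMeasure n) *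
      φ (((∫ u, K.ρ u ^ n * (L.ρ u / K.ρ u) ^ n ∂sphereMeasure n) /
        ∫ u, K.ρ u ^ n ∂sphereMeasure n) ^ (-(1 : ℝ) / n)) =
      n * (K.vol * φ (K.vol ^ ((1 : ℝ) / n) * L.vol ^ (-(1 : ℝ) / n))) := by
    rw [K.integral_pow_eq_mul_vol hn0, K.integral_pow_mul_ratio_pow_eq_mul_vol L hn0,
      mul_div_mul_left _ _ (Nat.cast_ne_zero.2 hn0), neg_div,
      Real.div_rpow_neg K.vol_nonneg L.vol_nonneg, ← neg_div, mul_assoc]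
  have hrhs := K.integral_pow_mul_ratio_pow_eq_mul_dualMixedVolume L hn0 φ
  have hFc := hφc.comp_rpow_const_Ioi (-(1 : ℝ) / n)
  refine ⟨?_, fun hFs => ?_⟩
  · have := hF.weighted_map_average_le (σ := sphereMeasure n) hFc hw hw0 hh hh0
    rw [hlhs, hrhs] at this
    exact le_of_mul_le_mul_left this (Nat.cast_pos.2 hn)
  · rw [← K.exists_ratio_pow_eq_iff L hn0, ← hFs.weighted_map_average_eq_iff (σ := sphereMeasure n) hFc hw hw0 hh hh0,
      hlhs, hrhs, mul_right_inj' (Nat.cast_ne_zero.2 hn0)]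

/-- Dual Orlicz-Minkowski inequality:
`Ṽ_φ(K,L) ≥ |K| φ(|K|^{1/n} |L|^{-1/n})`, with equality (for strictly convex
`F(t) = φ(t^{-1/n})`) iff `K` and `L` are dilates of each other. -/
theorem dual_orlicz_minkowski {n : ℕ} (hn : 0 < n) (φ : ℝ → ℝ)
    (hφc : ContinuousOn φ (Set.Ioi 0)) (hφp : ∀ t : ℝ, 0 < t → 0 < φ t)
    (hF : ConvexOn ℝ (Set.Ioi 0) (fun t : ℝ => φ (t ^ (-(1 : ℝ) / n))))
    (K L : StarBody n) :
    K.vol * φ (K.vol ^ ((1 : ℝ) / n) * L.vol ^ (-(1 : ℝ) / n)) ≤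
      dualMixedVolume φ K L ∧
      (StrictConvexOn ℝ (Set.Ioi 0) (fun t : ℝ => φ (t ^ (-(1 : ℝ) / n))) →
        (dualMixedVolume φ K L =
            K.vol * φ (K.vol ^ ((1 : ℝ) / n) * L.vol ^ (-(1 : ℝ) / n)) ↔
          ∃ lam : ℝ, 0 < lam ∧
            ∀ u : EuclideanSpace ℝ (Fin n), ‖u‖ = 1 → L.ρ u = lam * K.ρ u)) :=
  dual_orlicz_minkowski_general hn φ hφc hF K L
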